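/- Let G be a finite graph with symmetric edge weights, Ω a finite subset of vertices with Ω̃ connected, and g : Ω̄ → ℝ a nonnegative function supported on Ω̄⁺ = {x ∈ Ω̄ : g(x) > 0}. Then ( Σ_{x∈Ω̄⁺} g(x)² m_x ) · ( Σ_{e={x,y} ∈ E(Ω̄⁺,Ω̄)} μ_{xy} (g(y) − g(x))² ) ≥ ½ ( Σ_{e={x,y} ∈ E(Ω̄⁺,Ω̄)} μ_{xy} |g(x)² − g(y)²| )², where E(Ω̄⁺,Ω̄) denotes the set of edges of E(Ω,Ω̄) with at least one endpoint in Ω̄⁺. (In particular, Σ_{x∈Ω̄⁺} g(x)² m_x = Σ_{e={x,y} ∈ E(Ω̄⁺,Ω̄)} μ_{xy}(g(x)² + g(y)²).) -/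

import Mathlib

open scoped Classical
open Finset

variable {V : Type*} [Fintype V]

/-- The vertex boundary δΩ of a finite set Ω of vertices. -/
noncomputable def bdry (μ : V → V → ℝ) (Ω : Finset V) : Finset V :=
  Finset.univ.filter fun x => x ∉ Ω ∧ ∃ y ∈ Ω, 0 < μ x y

/-- Ω̄ = Ω ∪ δΩ. -/
noncomputable def clos (μ : V → V → ℝ) (Ω : Finset V) : Finset V :=
  Ω ∪ bdry μ Ω

/-- The vertex measure m on Ω̄. -/
noncomputable def vm (μ : V → V → ℝ) (Ω : Finset V) (x : V) : ℝ :=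
  if x ∈ Ω then ∑ y, μ x y else ∑ y ∈ Ω, μ x y

/-- m(B) = Σ_{x ∈ B} m_x. -/
noncomputable def msum (μ : V → V → ℝ) (Ω : Finset V) (B : Finset V) : ℝ :=
  ∑ x ∈ B, vm μ Ω x

/-- Sum over the edges e = {x,y} of E(Ω,Ω̄) of μ_{xy} · F x y (for symmetric F). -/
noncomputable def edgeSum (μ : V → V → ℝ) (Ω : Finset V) (F : V → V → ℝ) : ℝ :=
  (∑ x ∈ Ω, ∑ y ∈ Ω, μ x y * F x y) / 2 +
    ∑ x ∈ Ω, ∑ y ∈ bdry μ Ω, μ x y * F x y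

/-- Dirichlet energy D_Ω(f). -/
noncomputable def dirichlet (μ : V → V → ℝ) (Ω : Finset V) (f : V → ℝ) : ℝ :=
  edgeSum μ Ω fun x y => (f x - f y) ^ 2

/-- Dirichlet form D_Ω(f,g). -/
noncomputable def dform (μ : V → V → ℝ) (Ω : Finset V) (f g : V → ℝ) : ℝ :=
  edgeSum μ Ω fun x y => (f x - f y) * (g x - g y)

/-- μ(∂_Ω A): total weight of the edges of E(Ω,Ω̄) with exactly one endpoint in A. -/
noncomputable def cut (μ : V → V → ℝ) (Ω : Finset V) (A : Finset V) : ℝ :=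
  edgeSum μ Ω fun x y => if (x ∈ A) ↔ (y ∈ A) then 0 else 1

/-- The graph Laplacian Δf(x) (used for x ∈ Ω). -/
noncomputable def lap (μ : V → V → ℝ) (Ω : Finset V) (f : V → ℝ) (x : V) : ℝ :=
  (∑ y, μ x y * (f y - f x)) / vm μ Ω x

/-- The outward normal derivative ∂f/∂n(z) (used for z ∈ δΩ). -/
noncomputable def nderiv (μ : V → V → ℝ) (Ω : Finset V) (f : V → ℝ) (z : V) : ℝ :=
  (∑ x ∈ Ω, μ z x * (f z - f x)) / vm μ Ω z

/-- f is harmonic on Ω. -/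
def IsHarmonic (μ : V → V → ℝ) (Ω : Finset V) (u : V → ℝ) : Prop :=
  ∀ x ∈ Ω, lap μ Ω u x = 0

/-- Adjacency in the graph Ω̃ = (Ω̄, E(Ω,Ω̄)). -/
def tilAdj (μ : V → V → ℝ) (Ω : Finset V) (x y : V) : Prop :=
  0 < μ x y ∧ (x ∈ Ω ∨ y ∈ Ω)

/-- The graph Ω̃ is connected. -/
def TilConnected (μ : V → V → ℝ) (Ω : Finset V) : Prop :=
  ∀ x ∈ clos μ Ω, ∀ y ∈ clos μ Ω, Relation.ReflTransGen (tilAdj μ Ω) x y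

/-- λ₁(Ω): the first nontrivial eigenvalue of the Dirichlet-to-Neumann operator,
characterized by its Rayleigh quotient. -/
noncomputable def lambda1 (μ : V → V → ℝ) (Ω : Finset V) : ℝ :=
  sInf { r : ℝ | ∃ u : V → ℝ, IsHarmonic μ Ω u ∧
    (∑ x ∈ bdry μ Ω, u x ^ 2 * vm μ Ω x) = 1 ∧
    (∑ x ∈ bdry μ Ω, u x * vm μ Ω x) = 0 ∧
    r = dirichlet μ Ω u }

/-- The Escobar-type Cheeger constant h_E(Ω̃). -/
noncomputable def hE (μ : V → V → ℝ) (Ω : Finset V) : ℝ :=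
  sInf { r : ℝ | ∃ A : Finset V, A ⊆ clos μ Ω ∧
    0 < msum μ Ω (A ∩ bdry μ Ω) ∧
    msum μ Ω (A ∩ bdry μ Ω) ≤ msum μ Ω (bdry μ Ω) / 2 ∧
    r = cut μ Ω A / msum μ Ω (A ∩ bdry μ Ω) }

/-- The Jammes-type Cheeger constant h_J(Ω̃). -/
noncomputable def hJ (μ : V → V → ℝ) (Ω : Finset V) : ℝ :=
  sInf { r : ℝ | ∃ A : Finset V, A ⊆ clos μ Ω ∧
    (A ∩ bdry μ Ω).Nonempty ∧
    msum μ Ω A ≤ msum μ Ω (clos μ Ω) / 2 ∧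
    r = cut μ Ω A / msum μ Ω (A ∩ bdry μ Ω) }

/-- The classical Cheeger constant h(Ω̃). -/
noncomputable def cheeger (μ : V → V → ℝ) (Ω : Finset V) : ℝ :=
  sInf { r : ℝ | ∃ A : Finset V, A ⊆ clos μ Ω ∧ A.Nonempty ∧
    msum μ Ω A ≤ msum μ Ω (clos μ Ω) / 2 ∧
    r = cut μ Ω A / msum μ Ω A }

/-- Sum over the edges e = {x,y} of E(Ω,Ω̄) having at least one endpoint in P
of μ_{xy} · F x y (for symmetric F); used for the edge set E(Ω̄⁺,Ω̄). -/
noncomputable def edgeSumOn (μ : V → V → ℝ) (Ω : Finset V) (P : Finset V)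
    (F : V → V → ℝ) : ℝ :=
  (∑ x ∈ Ω, ∑ y ∈ Ω, if x ∈ P ∨ y ∈ P then μ x y * F x y else 0) / 2 +
    ∑ x ∈ Ω, ∑ y ∈ bdry μ Ω, if x ∈ P ∨ y ∈ P then μ x y * F x y else 0

/-! Writing the edge sums over E(Ω̄⁺,Ω̄) as nonnegatively weighted sums over ordered pairs, the
identity is the handshake formula Σ_e μ_{xy}(h(x) + h(y)) = Σ_{x ∈ Ω̄} h(x) m_x for h = g², which
vanishes off Ω̄⁺. The inequality is Cauchy–Schwarz for |g(x)² − g(y)²| = |g(x) − g(y)|·(g(x) + g(y))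
combined with (g(x) + g(y))² ≤ 2(g(x)² + g(y)²). -/
lemma sq_sub_sq_sq_le (a b : ℝ) : (a ^ 2 - b ^ 2) ^ 2 ≤ (b - a) ^ 2 * (2 * (a ^ 2 + b ^ 2)) := by
  -- the right side exceeds the left by (a - b)⁴
  nlinarith [sq_nonneg ((a - b) ^ 2)]

section EdgeSum

variable {μ : V → V → ℝ} {Ω : Finset V}

lemma notMem_of_mem_bdry {x : V} (hx : x ∈ bdry μ Ω) : x ∉ Ω :=
  (mem_filter.mp hx).2.1

lemma disjoint_bdry : Disjoint Ω (bdry μ Ω) :=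
  disjoint_left.mpr fun _ hx hb => notMem_of_mem_bdry hb hx

lemma edgeSumOn_eq_edgeSum (P : Finset V) (F : V → V → ℝ) :
    edgeSumOn μ Ω P F = edgeSum μ Ω fun x y => if x ∈ P ∨ y ∈ P then F x y else 0 := by
  simp only [edgeSumOn, edgeSum, mul_ite, mul_zero]

lemma edgeSum_congr {F G : V → V → ℝ} (h : ∀ x ∈ Ω, ∀ y ∈ clos μ Ω, F x y = G x y) :
    edgeSum μ Ω F = edgeSum μ Ω G := by
  refine congrArg₂ (· + ·) (congrArg (· / 2) ?_) ?_ <;>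
    refine sum_congr rfl fun x hx => sum_congr rfl fun y hy => ?_
  · rw [h x hx y (mem_union_left _ hy)]
  · rw [h x hx y (mem_union_right _ hy)]

lemma edgeSum_const_mul (c : ℝ) (F : V → V → ℝ) :
    edgeSum μ Ω (fun x y => c * F x y) = c * edgeSum μ Ω F := by
  rw [edgeSum, edgeSum, mul_add, mul_div_assoc']
  simp only [mul_sum, mul_left_comm]

lemma eq_zero_of_notMem_clos (hsym : ∀ x y, μ x y = μ y x) (hnn : ∀ x y, 0 ≤ μ x y)
    {x y : V} (hx : x ∈ Ω) (hy : y ∉ clos μ Ω) : μ x y = 0 := by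
  refine (hnn x y).antisymm' (not_lt.mp fun hpos => hy (mem_union_right _ ?_))
  exact mem_filter.mpr ⟨mem_univ y, fun h => hy (mem_union_left _ h), x, hx, hsym x y ▸ hpos⟩

lemma vm_of_mem (hsym : ∀ x y, μ x y = μ y x) (hnn : ∀ x y, 0 ≤ μ x y) {x : V} (hx : x ∈ Ω) :
    vm μ Ω x = ∑ y ∈ Ω, μ x y + ∑ y ∈ bdry μ Ω, μ x y := by
  rw [vm, if_pos hx, ← sum_union disjoint_bdry]
  exact (sum_subset (subset_univ _) fun y _ hy => eq_zero_of_notMem_clos hsym hnn hx hy).symm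

lemma vm_of_mem_bdry (hsym : ∀ x y, μ x y = μ y x) {x : V} (hx : x ∈ bdry μ Ω) :
    vm μ Ω x = ∑ y ∈ Ω, μ y x := by
  rw [vm, if_neg (notMem_of_mem_bdry hx)]
  exact sum_congr rfl fun y _ => hsym x y

lemma edgeSum_add_eq_sum_mul_vm (hsym : ∀ x y, μ x y = μ y x) (hnn : ∀ x y, 0 ≤ μ x y)
    (h : V → ℝ) : edgeSum μ Ω (fun x y => h x + h y) = ∑ x ∈ clos μ Ω, h x * vm μ Ω x := by
  have hΩ : ∑ x ∈ Ω, ∑ y ∈ Ω, μ x y * h y = ∑ x ∈ Ω, ∑ y ∈ Ω, μ x y * h x := by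
    rw [sum_comm]
    exact sum_congr rfl fun x _ => sum_congr rfl fun y _ => by rw [hsym]
  rw [edgeSum, clos, sum_union disjoint_bdry,
    sum_congr rfl fun x hx => congrArg (h x * ·) (vm_of_mem hsym hnn hx),
    sum_congr rfl fun x hx => congrArg (h x * ·) (vm_of_mem_bdry hsym hx)]
  simp only [mul_add, sum_add_distrib, hΩ]
  rw [sum_comm (s := Ω) (t := bdry μ Ω) (f := fun x y => μ x y * h y)]
  simp only [mul_comm (h _), sum_mul]
  ring

/-- An edge inside Ω is met twice as an ordered pair, hence the half weight. -/
noncomputable def pairWeight (μ : V → V → ℝ) (Ω : Finset V) (x y : V) : ℝ :=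
  (if x ∈ Ω ∧ y ∈ Ω then μ x y / 2 else 0) + (if x ∈ Ω ∧ y ∈ bdry μ Ω then μ x y else 0)

lemma pairWeight_nonneg (hnn : ∀ x y, 0 ≤ μ x y) (x y : V) : 0 ≤ pairWeight μ Ω x y := by
  unfold pairWeight
  have := hnn x y
  split_ifs <;> positivity

lemma edgeSum_eq_sum_pairWeight (F : V → V → ℝ) :
    edgeSum μ Ω F = ∑ p : V × V, pairWeight μ Ω p.1 p.2 * F p.1 p.2 := by
  simp [edgeSum, pairWeight, add_mul, ite_and, sum_add_distrib, Fintype.sum_prod_type, sum_div,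
    div_mul_eq_mul_div]

lemma edgeSum_sq_le (hnn : ∀ x y, 0 ≤ μ x y) {R F G : V → V → ℝ} (hF : ∀ x y, 0 ≤ F x y)
    (hG : ∀ x y, 0 ≤ G x y) (hR : ∀ x y, R x y ^ 2 ≤ F x y * G x y) :
    edgeSum μ Ω R ^ 2 ≤ edgeSum μ Ω F * edgeSum μ Ω G := by
  simp only [edgeSum_eq_sum_pairWeight]
  refine sum_sq_le_sum_mul_sum_of_sq_le_mul _ (fun p _ => ?_) (fun p _ => ?_) fun p _ => ?_
  · exact mul_nonneg (pairWeight_nonneg hnn _ _) (hF _ _)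
  · exact mul_nonneg (pairWeight_nonneg hnn _ _) (hG _ _)
  · calc (pairWeight μ Ω p.1 p.2 * R p.1 p.2) ^ 2
        = pairWeight μ Ω p.1 p.2 ^ 2 * R p.1 p.2 ^ 2 := mul_pow _ _ _
      _ ≤ pairWeight μ Ω p.1 p.2 ^ 2 * (F p.1 p.2 * G p.1 p.2) := by gcongr; exact hR _ _
      _ = _ := by ring

lemma sum_filter_mul_vm_eq_edgeSumOn (hsym : ∀ x y, μ x y = μ y x) (hnn : ∀ x y, 0 ≤ μ x y)
    {p : V → Prop} {f : V → ℝ} (hf : ∀ x, ¬ p x → f x = 0) :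
    ∑ x ∈ (clos μ Ω).filter p, f x * vm μ Ω x =
      edgeSumOn μ Ω ((clos μ Ω).filter p) (fun x y => f x + f y) := by
  rw [sum_filter_of_ne fun x _ hx => by_contra fun hp => hx (by rw [hf x hp, zero_mul]),
    ← edgeSum_add_eq_sum_mul_vm hsym hnn, edgeSumOn_eq_edgeSum]
  refine edgeSum_congr fun x hx y hy => ?_
  split_ifs with hxy
  · rfl
  · have hx' : ¬ p x := fun hp => hxy (.inl (mem_filter.mpr ⟨mem_union_left _ hx, hp⟩))
    have hy' : ¬ p y := fun hp => hxy (.inr (mem_filter.mpr ⟨hy, hp⟩))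
    rw [hf x hx', hf y hy', add_zero]

lemma edgeSumOn_const_mul (P : Finset V) (c : ℝ) (F : V → V → ℝ) :
    edgeSumOn μ Ω P (fun x y => c * F x y) = c * edgeSumOn μ Ω P F := by
  rw [edgeSumOn_eq_edgeSum, edgeSumOn_eq_edgeSum, ← edgeSum_const_mul]
  simp only [mul_ite, mul_zero]

lemma edgeSumOn_sq_le (hnn : ∀ x y, 0 ≤ μ x y) (P : Finset V) {R F G : V → V → ℝ}
    (hF : ∀ x y, 0 ≤ F x y) (hG : ∀ x y, 0 ≤ G x y) (hR : ∀ x y, R x y ^ 2 ≤ F x y * G x y) :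
    edgeSumOn μ Ω P R ^ 2 ≤ edgeSumOn μ Ω P F * edgeSumOn μ Ω P G := by
  simp only [edgeSumOn_eq_edgeSum]
  refine edgeSum_sq_le hnn (fun x y => ?_) (fun x y => ?_) fun x y => ?_ <;> split_ifs
  exacts [hF x y, le_rfl, hG x y, le_rfl, hR x y, by norm_num]

end EdgeSum

theorem stmt_19_general (μ : V → V → ℝ) (Ω : Finset V)
    (hsym : ∀ x y, μ x y = μ y x) (hnn : ∀ x y, 0 ≤ μ x y)
    (g : V → ℝ) (hg : ∀ x, 0 ≤ g x) :
    (∑ x ∈ (clos μ Ω).filter (fun x => 0 < g x), g x ^ 2 * vm μ Ω x) =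
        edgeSumOn μ Ω ((clos μ Ω).filter (fun x => 0 < g x))
          (fun x y => g x ^ 2 + g y ^ 2) ∧
    (∑ x ∈ (clos μ Ω).filter (fun x => 0 < g x), g x ^ 2 * vm μ Ω x) *
        edgeSumOn μ Ω ((clos μ Ω).filter (fun x => 0 < g x))
          (fun x y => (g y - g x) ^ 2) ≥
      (1 / 2) * (edgeSumOn μ Ω ((clos μ Ω).filter (fun x => 0 < g x))
          (fun x y => |g x ^ 2 - g y ^ 2|)) ^ 2 := by
  have hsupp : ∀ x, ¬ 0 < g x → g x ^ 2 = 0 := fun x hx => by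
    rw [(hg x).antisymm' (not_lt.mp hx), sq, zero_mul]
  have hmass := sum_filter_mul_vm_eq_edgeSumOn (Ω := Ω) hsym hnn hsupp
  refine ⟨hmass, ?_⟩
  have hCS := edgeSumOn_sq_le (Ω := Ω) hnn ((clos μ Ω).filter (fun x => 0 < g x))
    (R := fun x y => |g x ^ 2 - g y ^ 2|) (F := fun x y => (g y - g x) ^ 2)
    (G := fun x y => 2 * (g x ^ 2 + g y ^ 2)) (fun _ _ => sq_nonneg _) (fun _ _ => by positivity)
    fun x y => by simpa only [sq_abs] using sq_sub_sq_sq_le (g x) (g y)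
  rw [edgeSumOn_const_mul, ← hmass] at hCS
  linarith

/-- Lemma 5.3: for a nonnegative g supported on Ω̄⁺ = {g > 0},
(Σ_{x∈Ω̄⁺} g(x)² m_x) · (Σ_{E(Ω̄⁺,Ω̄)} μ_{xy}(g(y) − g(x))²)
  ≥ ½ (Σ_{E(Ω̄⁺,Ω̄)} μ_{xy}|g(x)² − g(y)²|)²,
where moreover Σ_{x∈Ω̄⁺} g(x)² m_x = Σ_{E(Ω̄⁺,Ω̄)} μ_{xy}(g(x)² + g(y)²). -/
theorem stmt_19 (μ : V → V → ℝ) (Ω : Finset V)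
    (hsym : ∀ x y, μ x y = μ y x) (hnn : ∀ x y, 0 ≤ μ x y)
    (hconn : TilConnected μ Ω)
    (g : V → ℝ) (hg : ∀ x, 0 ≤ g x) :
    (∑ x ∈ (clos μ Ω).filter (fun x => 0 < g x), g x ^ 2 * vm μ Ω x) =
        edgeSumOn μ Ω ((clos μ Ω).filter (fun x => 0 < g x))
          (fun x y => g x ^ 2 + g y ^ 2) ∧
    (∑ x ∈ (clos μ Ω).filter (fun x => 0 < g x), g x ^ 2 * vm μ Ω x) *
        edgeSumOn μ Ω ((clos μ Ω).filter (fun x => 0 < g x))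
          (fun x y => (g y - g x) ^ 2) ≥
      (1 / 2) * (edgeSumOn μ Ω ((clos μ Ω).filter (fun x => 0 < g x))
          (fun x y => |g x ^ 2 - g y ^ 2|)) ^ 2 :=
  stmt_19_general μ Ω hsym hnn g hg
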